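/- For all Δφ, δ, Δρ ∈ ℝ and all v ∈ ℂ: F(Δφ + δ, Δρ, e^{iδ}·v) = F(Δφ, Δρ, v). Consequently, v ∈ ℂ minimizes the function v ↦ F(Δφ, Δρ, v) over ℂ if and only if e^{iδ}·v minimizes the function v ↦ F(Δφ + δ, Δρ, v) over ℂ; in particular the optimal velocity of the single-sensor registration problem depends on the azimuth bias Δφ through a rotation by δ. -/

import Mathlib

/-- The index `k` (first of a consecutive pair) as an element of `Fin K`. -/
def loIdx {K : ℕ} (k : Fin (K - 1)) : Fin K := ⟨k.1, by have h := k.2; omega⟩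

/-- The index `k+1` (second of a consecutive pair) as an element of `Fin K`. -/
def hiIdx {K : ℕ} (k : Fin (K - 1)) : Fin K := ⟨k.1 + 1, by have h := k.2; omega⟩

/-- The bias-corrected measurement `g_k(Δφ, Δρ) = λ⁻¹ (ρ_k + Δρ) exp(i(φ_k + Δφ)) ∈ ℂ`. -/
noncomputable def gmeas {K : ℕ} (ρ φ : Fin K → ℝ) (lam : ℝ) (Δφ Δρ : ℝ) (k : Fin K) : ℂ :=
  ((lam⁻¹ * (ρ k + Δρ) : ℝ) : ℂ) * Complex.exp (Complex.I * ((φ k + Δφ : ℝ) : ℂ))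

/-- The single-sensor least-squares objective
`F(Δφ, Δρ, v) = Σ_{k=1}^{K−1} |g_{k+1}(Δφ, Δρ) − g_k(Δφ, Δρ) − T_k v|²`. -/
noncomputable def Fobj {K : ℕ} (ρ φ : Fin K → ℝ) (T : Fin (K - 1) → ℝ) (lam : ℝ)
    (Δφ Δρ : ℝ) (v : ℂ) : ℝ :=
  ∑ k : Fin (K - 1),
    ‖gmeas ρ φ lam Δφ Δρ (hiIdx k) - gmeas ρ φ lam Δφ Δρ (loIdx k)
      - (T k : ℂ) * v‖ ^ 2

/-!
Shifting the azimuth bias by `δ` multiplies every measurement `g_k` by the unit `e^{iδ}`, so with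
the velocity rotated by the same unit every residual `g_{k+1} - g_k - T_k v` is multiplied by
`e^{iδ}` and keeps its norm. Since multiplication by `e^{iδ}` is a bijection of `ℂ`, minimizers of
the two objectives correspond.
-/

theorem forall_le_iff_of_comp_equiv {α β γ : Type*} [LE γ] (e : α ≃ β) {f : α → γ} {g : β → γ}
    (hfg : ∀ a, g (e a) = f a) (a : α) :
    (∀ a', f a ≤ f a') ↔ ∀ b, g (e a) ≤ g b := by
  rw [hfg]
  exact e.forall_congr fun a' => by rw [hfg]

section Azimuth

variable {K : ℕ} (ρ φ : Fin K → ℝ) (T : Fin (K - 1) → ℝ) (lam : ℝ)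

theorem gmeas_add_azimuth (Δφ δ Δρ : ℝ) (k : Fin K) :
    gmeas ρ φ lam (Δφ + δ) Δρ k = Complex.exp (Complex.I * δ) * gmeas ρ φ lam Δφ Δρ k := by
  unfold gmeas
  push_cast
  rw [show Complex.I * (φ k + (Δφ + δ)) = Complex.I * δ + Complex.I * (φ k + Δφ) by ring,
    Complex.exp_add]
  ring

theorem Fobj_add_azimuth_exp_mul (Δφ δ Δρ : ℝ) (v : ℂ) :
    Fobj ρ φ T lam (Δφ + δ) Δρ (Complex.exp (Complex.I * δ) * v) = Fobj ρ φ T lam Δφ Δρ v := by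
  unfold Fobj
  refine Finset.sum_congr rfl fun k _ => ?_
  rw [gmeas_add_azimuth, gmeas_add_azimuth, mul_left_comm, ← mul_sub, ← mul_sub, norm_mul,
    Complex.norm_exp_I_mul_ofReal, one_mul]

end Azimuth

theorem optimal_velocity_rotates_with_azimuth_general
    (K : ℕ) (ρ φ : Fin K → ℝ) (T : Fin (K - 1) → ℝ) (lam : ℝ) :
    (∀ (Δφ δ Δρ : ℝ) (v : ℂ),
      Fobj ρ φ T lam (Δφ + δ) Δρ (Complex.exp (Complex.I * (δ : ℂ)) * v)
        = Fobj ρ φ T lam Δφ Δρ v) ∧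
    (∀ (Δφ δ Δρ : ℝ) (v : ℂ),
      (∀ w : ℂ, Fobj ρ φ T lam Δφ Δρ v ≤ Fobj ρ φ T lam Δφ Δρ w) ↔
      (∀ w : ℂ, Fobj ρ φ T lam (Δφ + δ) Δρ (Complex.exp (Complex.I * (δ : ℂ)) * v)
        ≤ Fobj ρ φ T lam (Δφ + δ) Δρ w)) := by
  refine ⟨Fobj_add_azimuth_exp_mul ρ φ T lam, fun Δφ δ Δρ v => ?_⟩
  exact forall_le_iff_of_comp_equiv (Equiv.mulLeft₀ _ (Complex.exp_ne_zero _))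
    (Fobj_add_azimuth_exp_mul ρ φ T lam Δφ δ Δρ) v

/-- Shifting the azimuth bias by `δ` rotates the optimal velocity by `e^{iδ}`:
`F(Δφ + δ, Δρ, e^{iδ}v) = F(Δφ, Δρ, v)`, and `v` minimizes `F(Δφ, Δρ, ·)` iff `e^{iδ}v`
minimizes `F(Δφ + δ, Δρ, ·)`. -/
theorem optimal_velocity_rotates_with_azimuth
    (K : ℕ) (hK : 2 ≤ K) (ρ φ : Fin K → ℝ) (T : Fin (K - 1) → ℝ) (lam : ℝ) (hlam : 0 < lam) :
    (∀ (Δφ δ Δρ : ℝ) (v : ℂ),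
      Fobj ρ φ T lam (Δφ + δ) Δρ (Complex.exp (Complex.I * (δ : ℂ)) * v)
        = Fobj ρ φ T lam Δφ Δρ v) ∧
    (∀ (Δφ δ Δρ : ℝ) (v : ℂ),
      (∀ w : ℂ, Fobj ρ φ T lam Δφ Δρ v ≤ Fobj ρ φ T lam Δφ Δρ w) ↔
      (∀ w : ℂ, Fobj ρ φ T lam (Δφ + δ) Δρ (Complex.exp (Complex.I * (δ : ℂ)) * v)
        ≤ Fobj ρ φ T lam (Δφ + δ) Δρ w)) :=
  optimal_velocity_rotates_with_azimuth_general K ρ φ T lam
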